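/- For a connected weighted graph with Laplacian Q and resistance matrix Ω, and for every link (i,j), the link resistance curvature satisfies κ_ij = lim_{t→0⁺} (1/t)·( 1 − (ρ_{t,i}^T Ω ρ_{t,j})/ω_ij ), where ρ_{t,i} := exp(−Qt)·e_i. -/

import Mathlib

open Matrix

variable {V : Type*}

/- The weighted Laplacian matrix of a weighted graph `(V, G, c)`:
`Q i i = ∑_{k ∼ i} c i k`, `Q i j = -c i j` for links `i ∼ j`, and `0` otherwise. -/
open Classical in
noncomputable def lapMatrix [Fintype V] (G : SimpleGraph V) (c : V → V → ℝ) :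
    Matrix V V ℝ :=
  Matrix.of fun i j =>
    if i = j then ∑ k, if G.Adj i k then c i k else 0
    else if G.Adj i j then -c i j else 0

/- The four Penrose equations characterizing the Moore–Penrose pseudoinverse. -/
def IsMoorePenroseInv [Fintype V] (Q Qd : Matrix V V ℝ) : Prop :=
  Q * Qd * Q = Q ∧ Qd * Q * Qd = Qd ∧ (Q * Qd)ᵀ = Q * Qd ∧ (Qd * Q)ᵀ = Qd * Q

/- The effective resistance `ω i j = (e_i - e_j)ᵀ Q† (e_i - e_j)`, computed from a
pseudoinverse `Qd` of the Laplacian. -/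
open Classical in
noncomputable def effRes [Fintype V] (Qd : Matrix V V ℝ) (i j : V) : ℝ :=
  (Pi.single i 1 - Pi.single j 1) ⬝ᵥ Qd *ᵥ (Pi.single i 1 - Pi.single j 1)

/- The node resistance curvature `p i = 1 - (1/2) ∑_{j ∼ i} c i j * ω i j`. -/
open Classical in
noncomputable def nodeCurv [Fintype V] (G : SimpleGraph V) (c : V → V → ℝ)
    (Qd : Matrix V V ℝ) (i : V) : ℝ :=
  1 - 1 / 2 * ∑ j, if G.Adj i j then c i j * effRes Qd i j else 0

/- The link resistance curvature `κ i j = 2 (p i + p j) / ω i j`. -/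
noncomputable def linkCurv [Fintype V] (G : SimpleGraph V) (c : V → V → ℝ)
    (Qd : Matrix V V ℝ) (i j : V) : ℝ :=
  2 * (nodeCurv G c Qd i + nodeCurv G c Qd j) / effRes Qd i j

/- The resistance matrix `Ω` with entries `(Ω) i j = ω i j`. -/
noncomputable def resMatrix [Fintype V] (Qd : Matrix V V ℝ) : Matrix V V ℝ :=
  Matrix.of fun i j => effRes Qd i j

/-!
Put `f t = ρ_{t,i}ᵀ Ω ρ_{t,j} = (e^{-tQ}ᵀ Ω e^{-tQ})_{ij}`. Then `f 0 = ω_ij`, and the limit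
is `-f'(0) / ω_ij` with `f'(0) = -(QΩ + ΩQ)_{ij}`. Expanding
`ω_ab = Q†_aa + Q†_bb - Q†_ab - Q†_ba` and using `Q 1 = 0` gives
`(QΩ)_ab = ∑_k Q_ak Q†_kk - 2 (QQ†)_ab`, while `p_a = 1 + (QΩ)_aa / 2`. On a connected graph
`ker Q` is spanned by `1`, so the symmetric projection `QQ† = Q†Q` fixes `e_i - e_j`; this turns
`(QΩ + ΩQ)_ij` into `2 (p_i + p_j)` and also shows `ω_ij > 0`.
-/

section Laplacian

variable [Fintype V] (G : SimpleGraph V) (c : V → V → ℝ)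

open Classical in
theorem lapMatrix_mulVec_apply (x : V → ℝ) (a : V) :
    (lapMatrix G c *ᵥ x) a = ∑ k, if G.Adj a k then c a k * (x a - x k) else 0 := by
  have hentry : ∀ k, lapMatrix G c a k * x k =
      (if a = k then (∑ m, if G.Adj a m then c a m else 0) * x a else 0)
        - if G.Adj a k then c a k * x k else 0 := by
    intro k
    by_cases hak : a = k
    · subst hak; simp [lapMatrix]
    · by_cases hadj : G.Adj a k <;> simp [lapMatrix, hak, hadj]
  calc (lapMatrix G c *ᵥ x) a
      = ∑ k, ((if a = k then (∑ m, if G.Adj a m then c a m else 0) * x a else 0)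
          - if G.Adj a k then c a k * x k else 0) := Finset.sum_congr rfl fun k _ => hentry k
    _ = ∑ k, ((if G.Adj a k then c a k else 0) * x a - if G.Adj a k then c a k * x k else 0) := by
      rw [Finset.sum_sub_distrib, Finset.sum_ite_eq, if_pos (Finset.mem_univ a), Finset.sum_mul,
        Finset.sum_sub_distrib]
    _ = _ := Finset.sum_congr rfl fun k _ => by split_ifs <;> ring

theorem sum_lapMatrix_apply (a : V) : ∑ k, lapMatrix G c a k = 0 := by
  simpa [mulVec, dotProduct, lapMatrix_mulVec_apply] using
    lapMatrix_mulVec_apply G c (fun _ => 1) a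

variable {c}

theorem lapMatrix_transpose (hsymm : ∀ a b, c a b = c b a) :
    (lapMatrix G c)ᵀ = lapMatrix G c := by
  ext a b
  by_cases hab : a = b
  · subst hab; rfl
  · by_cases hadj : G.Adj a b
    · simp [lapMatrix, hab, Ne.symm hab, hadj, hadj.symm, hsymm b a]
    · simp [lapMatrix, hab, Ne.symm hab, hadj, mt G.adj_symm hadj]

open Classical in
theorem dotProduct_lapMatrix_mulVec (hsymm : ∀ a b, c a b = c b a) (x : V → ℝ) :
    x ⬝ᵥ lapMatrix G c *ᵥ x =
      (∑ a, ∑ b, if G.Adj a b then c a b * (x a - x b) ^ 2 else 0) / 2 := by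
  have hswap : ∑ a, ∑ b, (if G.Adj a b then c a b * (x a - x b) else 0) * x a =
      -∑ a, ∑ b, (if G.Adj a b then c a b * (x a - x b) else 0) * x b := by
    rw [Finset.sum_comm, ← Finset.sum_neg_distrib]
    refine Finset.sum_congr rfl fun a _ => ?_
    rw [← Finset.sum_neg_distrib]
    refine Finset.sum_congr rfl fun b _ => ?_
    simp only [G.adj_comm b a, hsymm b a]
    split_ifs <;> ring
  have hsq : ∀ a b, (if G.Adj a b then c a b * (x a - x b) ^ 2 else 0) =
      (if G.Adj a b then c a b * (x a - x b) else 0) * x a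
        - (if G.Adj a b then c a b * (x a - x b) else 0) * x b := by
    intro a b; split_ifs <;> ring
  simp only [dotProduct, lapMatrix_mulVec_apply, hsq, Finset.sum_sub_distrib, Finset.sum_mul,
    mul_comm (x _)]
  rw [hswap]
  ring

theorem eq_of_dotProduct_lapMatrix_mulVec_eq_zero (hsymm : ∀ a b, c a b = c b a)
    (hpos : ∀ a b, G.Adj a b → 0 < c a b) (hconn : G.Connected) {x : V → ℝ}
    (hx : x ⬝ᵥ lapMatrix G c *ᵥ x = 0) (a b : V) : x a = x b := by
  classical
  have hterm_nonneg : ∀ p q, 0 ≤ if G.Adj p q then c p q * (x p - x q) ^ 2 else 0 := by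
    intro p q
    split_ifs with hpq
    · exact mul_nonneg (hpos p q hpq).le (sq_nonneg _)
    · exact le_rfl
  have hadj : ∀ p q, G.Adj p q → x p = x q := by
    intro p q hpq
    rw [dotProduct_lapMatrix_mulVec G hsymm, div_eq_zero_iff, or_iff_left two_ne_zero,
      Finset.sum_eq_zero_iff_of_nonneg fun p _ => Finset.sum_nonneg fun q _ => hterm_nonneg p q]
      at hx
    have hpq' := (Finset.sum_eq_zero_iff_of_nonneg fun q _ => hterm_nonneg p q).mp
      (hx p (Finset.mem_univ p)) q (Finset.mem_univ q)
    rw [if_pos hpq, mul_eq_zero, or_iff_right (hpos p q hpq).ne', sq_eq_zero_iff,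
      sub_eq_zero] at hpq'
    exact hpq'
  obtain ⟨w⟩ := hconn.preconnected a b
  induction w with
  | nil => rfl
  | cons h _ ih => exact (hadj _ _ h).trans ih

theorem lapMatrix_mulVec_eq_zero_iff (hsymm : ∀ a b, c a b = c b a)
    (hpos : ∀ a b, G.Adj a b → 0 < c a b) (hconn : G.Connected) (x : V → ℝ) :
    lapMatrix G c *ᵥ x = 0 ↔ ∀ a b, x a = x b := by
  refine ⟨fun hx => eq_of_dotProduct_lapMatrix_mulVec_eq_zero G hsymm hpos hconn
    (by rw [hx, dotProduct_zero]), fun hx => ?_⟩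
  ext a
  rw [lapMatrix_mulVec_apply]
  exact Finset.sum_eq_zero fun k _ => by rw [hx a k, sub_self, mul_zero, ite_self]

end Laplacian

namespace IsMoorePenroseInv

variable [Fintype V] {Q Qd : Matrix V V ℝ}

theorem mul_comm (h : IsMoorePenroseInv Q Qd) (hQ : Qᵀ = Q) : Q * Qd = Qd * Q := by
  obtain ⟨hQQdQ, -, hQQd, hQdQ⟩ := h
  have hP : Q * Qd = Qdᵀ * Q := by rw [← hQQd, transpose_mul, hQ]
  have hR : Qd * Q = Q * Qdᵀ := by rw [← hQdQ, transpose_mul, hQ]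
  calc Q * Qd = Qdᵀ * (Q * Qd * Q) := by rw [hQQdQ, hP]
    _ = Q * Qd * Qd * Q := by simp only [← Matrix.mul_assoc, ← hP]
    _ = Q * Qd * Q * Qdᵀ := by rw [Matrix.mul_assoc (Q * Qd), hR, Matrix.mul_assoc (Q * Qd)]
    _ = Qd * Q := by rw [hQQdQ, hR]

theorem mul_transpose (h : IsMoorePenroseInv Q Qd) (hQ : Qᵀ = Q) : Q * Qdᵀ = Q * Qd := by
  rw [← hQ, ← transpose_mul, h.2.2.2, hQ, h.mul_comm hQ]

theorem mulVec_eq_self (h : IsMoorePenroseInv Q Qd) (hQ : Qᵀ = Q)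
    (hker : ∀ x, Q *ᵥ x = 0 ↔ ∀ a b, x a = x b) {v : V → ℝ} (hv : ∑ a, v a = 0) :
    (Q * Qd) *ᵥ v = v := by
  rw [h.mul_comm hQ]
  obtain ⟨hQQdQ, -, -, hQdQ⟩ := h
  set w := v - (Qd * Q) *ᵥ v with hw
  have hconst : ∀ a b, w a = w b := by
    rw [← hker, hw, mulVec_sub, mulVec_mulVec, ← Matrix.mul_assoc, hQQdQ, sub_self]
  have hsum : ∑ a, w a = 0 := by
    have hQ1 : Q *ᵥ 1 = 0 := (hker 1).mpr fun _ _ => rfl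
    rw [← one_dotProduct, hw, dotProduct_sub, dotProduct_mulVec, ← hQdQ, vecMul_transpose,
      ← mulVec_mulVec, hQ1, mulVec_zero, zero_dotProduct, one_dotProduct, hv, sub_zero]
  have hw0 : w = 0 := by
    ext a
    have : Nonempty V := ⟨a⟩
    simpa [Finset.sum_congr rfl fun b _ => hconst b a, Fintype.card_ne_zero] using hsum
  rw [hw, sub_eq_zero] at hw0
  exact hw0.symm

end IsMoorePenroseInv

section Resistance

variable [Fintype V] (Qd : Matrix V V ℝ)

theorem effRes_eq (a b : V) : effRes Qd a b = Qd a a + Qd b b - Qd a b - Qd b a := by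
  simp only [effRes, mulVec_sub, mulVec_single_one, sub_dotProduct, single_dotProduct,
    Pi.sub_apply, col_apply, one_mul]
  ring

theorem effRes_comm (a b : V) : effRes Qd a b = effRes Qd b a := by
  rw [effRes_eq, effRes_eq]; ring

theorem effRes_self (a : V) : effRes Qd a a = 0 := by
  rw [effRes_eq]; ring

theorem resMatrix_transpose : (resMatrix Qd)ᵀ = resMatrix Qd := by
  ext a b; exact effRes_comm Qd b a

theorem mul_resMatrix_apply {Q : Matrix V V ℝ} (hrow : ∀ a, ∑ k, Q a k = 0) (a b : V) :
    (Q * resMatrix Qd) a b = ∑ k, Q a k * Qd k k - (Q * Qd) a b - (Q * Qdᵀ) a b := by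
  simp only [mul_apply, resMatrix, of_apply, effRes_eq, transpose_apply, mul_add, mul_sub,
    Finset.sum_sub_distrib, Finset.sum_add_distrib, ← Finset.sum_mul, hrow, zero_mul, add_zero]

open Classical in
theorem nodeCurv_eq (G : SimpleGraph V) (c : V → V → ℝ) (a : V) :
    nodeCurv G c Qd a = 1 + (lapMatrix G c * resMatrix Qd) a a / 2 := by
  have hterm : ∀ k, lapMatrix G c a k * resMatrix Qd k a =
      -if G.Adj a k then c a k * effRes Qd a k else 0 := by
    intro k
    by_cases hak : a = k
    · subst hak; simp [resMatrix, effRes_self]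
    · by_cases hadj : G.Adj a k <;> simp [lapMatrix, resMatrix, hak, hadj, effRes_comm Qd k a]
  rw [nodeCurv, mul_apply, Finset.sum_congr rfl fun k _ => hterm k, Finset.sum_neg_distrib]
  ring

end Resistance

section ConnectedGraph

variable [Fintype V] {G : SimpleGraph V} {c : V → V → ℝ} {Qd : Matrix V V ℝ}

theorem lapMatrix_mul_mulVec_single_sub_single [DecidableEq V] (hsymm : ∀ a b, c a b = c b a)
    (hpos : ∀ a b, G.Adj a b → 0 < c a b) (hconn : G.Connected)
    (hQd : IsMoorePenroseInv (lapMatrix G c) Qd) (i j : V) :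
    (lapMatrix G c * Qd) *ᵥ (Pi.single i 1 - Pi.single j 1) = Pi.single i 1 - Pi.single j 1 :=
  hQd.mulVec_eq_self (lapMatrix_transpose G hsymm) (lapMatrix_mulVec_eq_zero_iff G hsymm hpos hconn)
    (by simp [Finset.sum_sub_distrib])

theorem effRes_pos (hsymm : ∀ a b, c a b = c b a)
    (hpos : ∀ a b, G.Adj a b → 0 < c a b) (hconn : G.Connected)
    (hQd : IsMoorePenroseInv (lapMatrix G c) Qd) {i j : V} (hij : i ≠ j) :
    0 < effRes Qd i j := by
  classical
  set v : V → ℝ := Pi.single i 1 - Pi.single j 1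
  have hv := lapMatrix_mul_mulVec_single_sub_single hsymm hpos hconn hQd i j
  rw [← mulVec_mulVec] at hv
  have hω : effRes Qd i j = Qd *ᵥ v ⬝ᵥ lapMatrix G c *ᵥ (Qd *ᵥ v) := by
    rw [hv, dotProduct_comm]; rfl
  rw [hω]
  refine lt_of_le_of_ne ?_ fun h0 => ?_
  · rw [dotProduct_lapMatrix_mulVec G hsymm]
    refine div_nonneg (Finset.sum_nonneg fun a _ => Finset.sum_nonneg fun b _ => ?_) two_pos.le
    split_ifs with hab
    · exact mul_nonneg (hpos a b hab).le (sq_nonneg _)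
    · exact le_rfl
  · have hker := (lapMatrix_mulVec_eq_zero_iff G hsymm hpos hconn _).mpr
      (eq_of_dotProduct_lapMatrix_mulVec_eq_zero G hsymm hpos hconn h0.symm)
    have hvi := congrFun (hv.symm.trans hker) i
    simp [hij] at hvi

theorem anticommutator_lapMatrix_resMatrix_apply (hsymm : ∀ a b, c a b = c b a)
    (hpos : ∀ a b, G.Adj a b → 0 < c a b) (hconn : G.Connected)
    (hQd : IsMoorePenroseInv (lapMatrix G c) Qd) {i j : V} (hij : i ≠ j) :
    (lapMatrix G c * resMatrix Qd + resMatrix Qd * lapMatrix G c) i j =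
      2 * (nodeCurv G c Qd i + nodeCurv G c Qd j) := by
  classical
  have hv := lapMatrix_mul_mulVec_single_sub_single hsymm hpos hconn hQd i j
  have hvi := congrFun hv i
  have hvj := congrFun hv j
  simp only [mulVec_sub, mulVec_single_one, Pi.sub_apply, col_apply, Pi.single_eq_same,
    Pi.single_eq_of_ne hij, Pi.single_eq_of_ne hij.symm] at hvi hvj
  set Q := lapMatrix G c
  have hQ : Qᵀ = Q := lapMatrix_transpose G hsymm
  have hΩQ : (resMatrix Qd * Q) i j = (Q * resMatrix Qd) j i := by
    rw [← transpose_apply (Q * resMatrix Qd), transpose_mul, hQ, resMatrix_transpose]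
  have hentry : ∀ a b, (Q * resMatrix Qd) a b = ∑ k, Q a k * Qd k k - 2 * (Q * Qd) a b := by
    intro a b
    rw [mul_resMatrix_apply Qd (sum_lapMatrix_apply G c), hQd.mul_transpose hQ]
    ring
  rw [Matrix.add_apply, hΩQ, hentry, hentry, nodeCurv_eq, nodeCurv_eq, hentry, hentry]
  linarith

end ConnectedGraph

section HeatKernel

variable [Fintype V] [DecidableEq V]

theorem mulVec_single_dotProduct_mulVec_mulVec_single {R : Type*} [CommSemiring R]
    (A B C : Matrix V V R) (i j : V) :
    (A *ᵥ Pi.single i 1) ⬝ᵥ B *ᵥ (C *ᵥ Pi.single j 1) = (Aᵀ * B * C) i j := by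
  rw [mulVec_single_one, mulVec_single_one]
  simp only [dotProduct, mulVec, mul_apply, col_apply, transpose_apply, Finset.mul_sum,
    Finset.sum_mul, mul_assoc]
  exact Finset.sum_comm

-- `NormedSpace.exp` only sees the topology of `Matrix V V ℝ`; any submultiplicative norm serves
-- to differentiate it.
attribute [local instance] Matrix.linftyOpNormedRing Matrix.linftyOpNormedAlgebra

theorem hasDerivAt_exp_neg_smul (Q : Matrix V V ℝ) :
    HasDerivAt (fun t : ℝ => NormedSpace.exp (-(t • Q))) (-Q) 0 := by
  have h := hasDerivAt_exp_smul_const (𝕂 := ℝ) (-Q) 0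
  simp only [zero_smul, neg_zero, NormedSpace.exp_zero, one_mul, smul_neg] at h
  exact h

theorem hasDerivAt_transpose_exp_neg_smul_mul_mul_exp_neg_smul (Q Ω : Matrix V V ℝ) :
    HasDerivAt (fun t : ℝ => (NormedSpace.exp (-(t • Q)))ᵀ * Ω * NormedSpace.exp (-(t • Q)))
      (-(Qᵀ * Ω + Ω * Q)) 0 := by
  have hT : HasDerivAt (fun t : ℝ => (NormedSpace.exp (-(t • Q)))ᵀ) (-Qᵀ) 0 := by
    simpa only [← Matrix.exp_transpose, transpose_neg, transpose_smul] using
      hasDerivAt_exp_neg_smul Qᵀ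
  have h := (hT.mul_const Ω).fun_mul (hasDerivAt_exp_neg_smul Q)
  simp only [zero_smul, neg_zero, NormedSpace.exp_zero, transpose_one, Matrix.mul_one,
    Matrix.one_mul, Matrix.mul_neg, Matrix.neg_mul] at h
  rwa [neg_add]

theorem hasDerivAt_exp_neg_smul_mulVec_single_dotProduct (Q Ω : Matrix V V ℝ) (i j : V) :
    HasDerivAt (fun t : ℝ => (NormedSpace.exp (-(t • Q)) *ᵥ Pi.single i 1) ⬝ᵥ
        Ω *ᵥ (NormedSpace.exp (-(t • Q)) *ᵥ Pi.single j 1))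
      (-(Qᵀ * Ω + Ω * Q) i j) 0 := by
  simp only [mulVec_single_dotProduct_mulVec_mulVec_single]
  exact (Matrix.entryLinearMap ℝ ℝ i j).toContinuousLinearMap.hasFDerivAt.comp_hasDerivAt 0
    (hasDerivAt_transpose_exp_neg_smul_mul_mul_exp_neg_smul Q Ω)

end HeatKernel

theorem tendsto_one_div_mul_one_sub_div_nhdsGT {f : ℝ → ℝ} {f' ω : ℝ} (hf : HasDerivAt f f' 0)
    (hf0 : f 0 = ω) (hω : ω ≠ 0) :
    Filter.Tendsto (fun t => 1 / t * (1 - f t / ω)) (nhdsWithin 0 (Set.Ioi 0))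
      (nhds (-f' / ω)) := by
  convert (hf.tendsto_slope_zero_right.neg).div_const ω using 2 with t
  simp only [zero_add, smul_eq_mul, hf0]
  field_simp
  ring

theorem linkCurv_eq_limit_average_distance_general
    [Fintype V] [DecidableEq V] (G : SimpleGraph V)
    (c : V → V → ℝ) (hsymm : ∀ i j, c i j = c j i)
    (hpos : ∀ i j, G.Adj i j → 0 < c i j)
    (hconn : G.Connected)
    (Qd : Matrix V V ℝ) (hQd : IsMoorePenroseInv (lapMatrix G c) Qd)
    (i j : V) (hij : G.Adj i j) :
    Filter.Tendsto
      (fun t : ℝ =>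
        1 / t * (1 -
          ((NormedSpace.exp (-(t • lapMatrix G c)) *ᵥ Pi.single i 1) ⬝ᵥ
            resMatrix Qd *ᵥ (NormedSpace.exp (-(t • lapMatrix G c)) *ᵥ Pi.single j 1)) /
          effRes Qd i j))
      (nhdsWithin 0 (Set.Ioi 0)) (nhds (linkCurv G c Qd i j)) := by
  have hderiv := hasDerivAt_exp_neg_smul_mulVec_single_dotProduct (lapMatrix G c) (resMatrix Qd) i j
  rw [lapMatrix_transpose G hsymm,
    anticommutator_lapMatrix_resMatrix_apply hsymm hpos hconn hQd hij.ne] at hderiv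
  have hlim := tendsto_one_div_mul_one_sub_div_nhdsGT hderiv
    (by simp only [zero_smul, neg_zero, NormedSpace.exp_zero, one_mulVec]
        rw [mulVec_single_one, single_one_dotProduct]; rfl)
    (effRes_pos hsymm hpos hconn hQd hij.ne).ne'
  convert hlim using 2
  rw [linkCurv]
  ring

theorem linkCurv_eq_limit_average_distance
    [Fintype V] [DecidableEq V] (G : SimpleGraph V) [DecidableRel G.Adj]
    (c : V → V → ℝ) (hsymm : ∀ i j, c i j = c j i)
    (hpos : ∀ i j, G.Adj i j → 0 < c i j)
    (hconn : G.Connected)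
    (Qd : Matrix V V ℝ) (hQd : IsMoorePenroseInv (lapMatrix G c) Qd)
    (i j : V) (hij : G.Adj i j) :
    Filter.Tendsto
      (fun t : ℝ =>
        1 / t * (1 -
          ((NormedSpace.exp (-(t • lapMatrix G c)) *ᵥ Pi.single i 1) ⬝ᵥ
            resMatrix Qd *ᵥ (NormedSpace.exp (-(t • lapMatrix G c)) *ᵥ Pi.single j 1)) /
          effRes Qd i j))
      (nhdsWithin 0 (Set.Ioi 0)) (nhds (linkCurv G c Qd i j)) :=
  linkCurv_eq_limit_average_distance_general G c hsymm hpos hconn Qd hQd i j hij
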